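/- Let a > 0. The Charlier functions form an orthonormal family in ℓ²(ℕ): for all k, l ∈ ℕ, Σ_{x∈ℕ} f_k^{(a)}(x) f_l^{(a)}(x) = 1 if k = l and 0 otherwise. Equivalently, Σ_{x∈ℕ} (e^{−a} a^x/x!) C_k^{(a)}(x) C_l^{(a)}(x) = δ_{kl} · k!/a^k. -/

import Mathlib

/-!
Write `w(x) = e^{-a} a^x / x!`. Under these weights, multiplying by `binom(x, j)` is a shift:
`Σ_x w(x) binom(x, j) f(x) = a^j / j! · Σ_y w(y) f(y + j)`. Expanding `C_k` in the binomial basis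
thus turns `Σ_x w C_k C_l` into `Σ_y w(y) Σ_j (-1)^j binom(k, j) C_l(y + j)`, that is, into
`(-1)^k Σ_y w(y) Δ^k C_l(y)` with `Δ` the forward difference. Since `Δ C_n = -(n / a) C_{n-1}`,
this equals `l (l-1) ⋯ (l-k+1) a^{-k} Σ_y w(y) C_{l-k}(y)`, and `Σ_y w(y) C_n(y) = (1 - 1)^n`
vanishes unless `n = 0`.
-/

open Real Nat

/-- The Charlier polynomial of parameter `a > 0`:
`C_k^{(a)}(x) = Σ_{j=0}^{k} binom(k,j)·binom(x,j)·j!·(−1/a)^j` for `x ∈ ℕ`. -/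
noncomputable def charlier (a : ℝ) (k x : ℕ) : ℝ :=
  ∑ j ∈ Finset.range (k + 1),
    (k.choose j : ℝ) * (x.choose j : ℝ) * (j ! : ℝ) * (-1 / a) ^ j

/-- The `k`-th Charlier function `f_k^{(a)}(x) = e^{−a/2} √(a^{x+k}/(x!·k!)) · C_k^{(a)}(x)`. -/
noncomputable def charlierFun (a : ℝ) (k x : ℕ) : ℝ :=
  Real.exp (-a / 2) * Real.sqrt (a ^ (x + k) / ((x ! : ℝ) * (k ! : ℝ))) * charlier a k x

open Finset

-- Mathlib's `poissonPMFReal` takes `r : ℝ≥0`; the identities below hold for every real `a`.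
noncomputable def poissonWeight (a : ℝ) (x : ℕ) : ℝ := Real.exp (-a) * a ^ x / x !

section Poisson

variable (a : ℝ)

theorem hasSum_poissonWeight : HasSum (poissonWeight a) 1 := by
  have h := (NormedSpace.expSeries_div_hasSum_exp a).mul_left (Real.exp (-a))
  rw [← Real.exp_eq_exp_ℝ, ← Real.exp_add, neg_add_cancel, Real.exp_zero] at h
  exact h.congr_fun fun x => by rw [poissonWeight, mul_div_assoc]

theorem poissonWeight_add_mul_choose (y j : ℕ) :
    poissonWeight a (y + j) * (y + j).choose j = a ^ j / j ! * poissonWeight a y := by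
  have hfac : ((y + j).choose j : ℝ) * y ! * j ! = (y + j)! := by
    exact_mod_cast Nat.add_choose_mul_factorial_mul_factorial y j
  have hchoose : ((y + j).choose j : ℝ) ≠ 0 := by
    exact_mod_cast (Nat.choose_pos (Nat.le_add_left j y)).ne'
  simp only [poissonWeight, ← hfac, pow_add]
  field_simp

variable {a}

theorem HasSum.poissonWeight_mul_choose {f : ℕ → ℝ} {s : ℝ} (j : ℕ)
    (h : HasSum (fun y => poissonWeight a y * f (y + j)) s) :
    HasSum (fun x => poissonWeight a x * x.choose j * f x) (a ^ j / j ! * s) := by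
  have hvanish : ∀ x ∉ Set.range (· + j), poissonWeight a x * x.choose j * f x = 0 := by
    intro x hx
    have hxj : x < j := by
      by_contra! hjx
      exact hx ⟨x - j, Nat.sub_add_cancel hjx⟩
    simp [Nat.choose_eq_zero_of_lt hxj]
  refine ((add_left_injective j).hasSum_iff hvanish).mp ?_
  refine (h.mul_left (a ^ j / j !)).congr_fun fun y => ?_
  rw [Function.comp_apply, poissonWeight_add_mul_choose, mul_assoc]

variable (a) in
theorem hasSum_poissonWeight_mul_choose (j : ℕ) :
    HasSum (fun x => poissonWeight a x * x.choose j) (a ^ j / j !) := by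
  simpa using
    ((hasSum_poissonWeight a).mul_right 1).poissonWeight_mul_choose (f := fun _ => 1) j

theorem summable_poissonWeight_mul {f : ℕ → ℝ} {C B : ℝ} (hf : ∀ x, |f x| ≤ C * B ^ x) :
    Summable (fun x => poissonWeight a x * f x) := by
  refine .of_norm_bounded
    ((Real.summable_pow_div_factorial (|a| * B)).mul_left (Real.exp (-a) * C)) fun x => ?_
  rw [Real.norm_eq_abs, abs_mul, poissonWeight, abs_div, abs_mul, abs_pow, Real.abs_exp,
    Nat.abs_cast, mul_pow]
  calc Real.exp (-a) * |a| ^ x / x ! * |f x| ≤ Real.exp (-a) * |a| ^ x / x ! * (C * B ^ x) := by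
        gcongr; exact hf x
    _ = _ := by ring

end Poisson

theorem sum_neg_one_pow_mul_choose_mul_shift {R : Type*} [CommRing R] (f : ℕ → R) (k y : ℕ) :
    ∑ j ∈ range (k + 1), (-1) ^ j * (k.choose j : R) * f (y + j) =
      (-1) ^ k * (fwdDiff 1)^[k] f y := by
  rw [fwdDiff_iter_eq_sum_shift, mul_sum]
  refine sum_congr rfl fun j hj => ?_
  have hjk : j ≤ k := Nat.lt_succ_iff.mp (mem_range.mp hj)
  rw [zsmul_eq_mul, smul_eq_mul, mul_one]
  push_cast
  obtain ⟨m, rfl⟩ := Nat.exists_eq_add_of_le hjk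
  have hsq : (-1 : R) ^ m * (-1) ^ m = 1 := by rw [← mul_pow]; simp
  rw [Nat.add_sub_cancel_left, pow_add]
  linear_combination (-(-1) ^ j * ((j + m).choose j : R) * f (y + j)) * hsq

section Charlier

variable (a : ℝ)

theorem charlier_zero_left (x : ℕ) : charlier a 0 x = 1 := by
  simp [charlier]

theorem abs_charlier_le (k : ℕ) : ∃ K, ∀ x, |charlier a k x| ≤ K * 2 ^ x := by
  refine ⟨∑ j ∈ range (k + 1), |(k.choose j : ℝ) * j ! * (-1 / a) ^ j|, fun x => ?_⟩
  rw [charlier, sum_mul]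
  refine (abs_sum_le_sum_abs _ _).trans (sum_le_sum fun j _ => ?_)
  have hchoose : (x.choose j : ℝ) ≤ 2 ^ x := by exact_mod_cast Nat.choose_le_two_pow x j
  calc |(k.choose j : ℝ) * x.choose j * j ! * (-1 / a) ^ j|
      = |(k.choose j : ℝ) * j ! * (-1 / a) ^ j| * x.choose j := by
        rw [mul_right_comm _ _ ((j ! : ℝ)), mul_right_comm _ _ ((-1 / a) ^ j), abs_mul (_ * _),
          Nat.abs_cast]
    _ ≤ _ := by gcongr

theorem charlier_succ_add_one_sub (n x : ℕ) :
    charlier a (n + 1) (x + 1) - charlier a (n + 1) x = -1 / a * (n + 1) * charlier a n x := by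
  rw [charlier, charlier, charlier, ← sum_sub_distrib, sum_range_succ', mul_sum]
  simp only [Nat.choose_zero_right, sub_self, add_zero]
  refine sum_congr rfl fun j _ => ?_
  have hpascal : ((x + 1).choose (j + 1) : ℝ) = x.choose j + x.choose (j + 1) := by
    exact_mod_cast Nat.choose_succ_succ' x j
  have habsorb : ((n + 1 : ℕ) : ℝ) * n.choose j = (n + 1).choose (j + 1) * (j + 1 : ℕ) := by
    exact_mod_cast Nat.add_one_mul_choose_eq n j
  rw [hpascal, Nat.factorial_succ, pow_succ]
  push_cast at habsorb ⊢
  linear_combination (1 / a * x.choose j * j ! * (-1 / a) ^ j) * habsorb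

theorem fwdDiff_charlier (n x : ℕ) :
    fwdDiff 1 (charlier a n) x = -1 / a * n * charlier a (n - 1) x := by
  cases n with
  | zero => simp [fwdDiff, charlier_zero_left]
  | succ n => simpa [fwdDiff] using charlier_succ_add_one_sub a n x

-- For `k > l` both sides vanish: `l.descFactorial k = 0` absorbs the truncated `l - k`.
theorem fwdDiff_iter_charlier (k l x : ℕ) :
    (fwdDiff 1)^[k] (charlier a l) x = (-1 / a) ^ k * l.descFactorial k * charlier a (l - k) x := by
  induction k generalizing x with
  | zero => simp
  | succ k ih =>
    have hfun : (fwdDiff 1)^[k] (charlier a l) =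
        ((-1 / a) ^ k * l.descFactorial k) • charlier a (l - k) :=
      funext fun y => by rw [ih, Pi.smul_apply, smul_eq_mul, mul_assoc]
    rw [Function.iterate_succ_apply', hfun, fwdDiff_const_smul, Pi.smul_apply, fwdDiff_charlier,
      Nat.descFactorial_succ, Nat.sub_sub, smul_eq_mul]
    push_cast
    ring

end Charlier

section Orthogonality

variable {a : ℝ}

theorem hasSum_poissonWeight_mul_charlier (ha : a ≠ 0) (n : ℕ) :
    HasSum (fun x => poissonWeight a x * charlier a n x) (if n = 0 then 1 else 0) := by
  have hsum := hasSum_sum fun j (_ : j ∈ range (n + 1)) =>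
    (hasSum_poissonWeight_mul_choose a j).mul_right ((n.choose j : ℝ) * j ! * (-1 / a) ^ j)
  have hvalue : ∑ j ∈ range (n + 1), a ^ j / j ! * ((n.choose j : ℝ) * j ! * (-1 / a) ^ j)
      = (-1 + 1) ^ n := by
    rw [add_pow]
    refine sum_congr rfl fun j _ => ?_
    have hpow : a ^ j * (-1 / a) ^ j = (-1) ^ j := by rw [← mul_pow, mul_div_cancel₀ _ ha]
    rw [one_pow, mul_one, ← hpow]
    field_simp
  rw [hvalue, neg_add_cancel, zero_pow_eq] at hsum
  refine hsum.congr_fun fun x => ?_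
  rw [charlier, mul_sum]
  exact sum_congr rfl fun j _ => by ring

theorem hasSum_poissonWeight_mul_fwdDiff_iter_charlier (ha : a ≠ 0) (k l : ℕ) :
    HasSum (fun x => poissonWeight a x * (fwdDiff 1)^[k] (charlier a l) x)
      (if k = l then (-1 / a) ^ k * k ! else 0) := by
  have hvalue : (-1 / a) ^ k * l.descFactorial k * (if l - k = 0 then 1 else 0)
      = if k = l then (-1 / a) ^ k * k ! else 0 := by
    rcases lt_trichotomy k l with hkl | rfl | hlk
    · rw [if_neg (Nat.sub_ne_zero_of_lt hkl), if_neg hkl.ne, mul_zero]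
    · rw [if_pos (Nat.sub_self k), if_pos rfl, Nat.descFactorial_self, mul_one]
    · rw [Nat.descFactorial_eq_zero_iff_lt.mpr hlk, if_neg hlk.ne']
      simp
  rw [← hvalue]
  refine ((hasSum_poissonWeight_mul_charlier ha (l - k)).mul_left
    ((-1 / a) ^ k * l.descFactorial k)).congr_fun fun x => ?_
  rw [fwdDiff_iter_charlier]
  ring

theorem hasSum_poissonWeight_mul_charlier_mul_charlier (ha : a ≠ 0) (k l : ℕ) :
    HasSum (fun x => poissonWeight a x * charlier a k x * charlier a l x)
      (if k = l then k ! / a ^ k else 0) := by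
  obtain ⟨K, hK⟩ := abs_charlier_le a l
  set S : ℕ → ℝ := fun j => ∑' y, poissonWeight a y * charlier a l (y + j)
  have hshift (j : ℕ) : HasSum (fun y => poissonWeight a y * charlier a l (y + j)) (S j) :=
    (summable_poissonWeight_mul (C := K * 2 ^ j) (B := 2) fun y => by
      rw [mul_assoc, ← pow_add, add_comm j]; exact hK (y + j)).hasSum
  have hS : ∑ j ∈ range (k + 1), (-1) ^ j * (k.choose j : ℝ) * S j
      = (-1) ^ k * if k = l then (-1 / a) ^ k * k ! else 0 := by
    refine (hasSum_sum fun j (_ : j ∈ range (k + 1)) => (hshift j).mul_left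
      ((-1) ^ j * (k.choose j : ℝ))).unique
      (((hasSum_poissonWeight_mul_fwdDiff_iter_charlier ha k l).mul_left ((-1) ^ k)).congr_fun
        fun y => ?_)
    rw [mul_left_comm, ← sum_neg_one_pow_mul_choose_mul_shift, mul_sum]
    exact sum_congr rfl fun j _ => by ring
  have hsum := hasSum_sum fun j (_ : j ∈ range (k + 1)) =>
    ((hshift j).poissonWeight_mul_choose j).mul_left ((k.choose j : ℝ) * j ! * (-1 / a) ^ j)
  have hvalue :
      ∑ j ∈ range (k + 1), (k.choose j : ℝ) * j ! * (-1 / a) ^ j * (a ^ j / j ! * S j)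
        = if k = l then k ! / a ^ k else 0 := by
    calc _ = ∑ j ∈ range (k + 1), (-1) ^ j * (k.choose j : ℝ) * S j := by
          refine sum_congr rfl fun j _ => ?_
          have hpow : a ^ j * (-1 / a) ^ j = (-1) ^ j := by rw [← mul_pow, mul_div_cancel₀ _ ha]
          rw [← hpow]
          field_simp
      _ = _ := hS
      _ = _ := by
          split_ifs
          · rw [← mul_assoc, ← mul_pow, neg_one_mul, neg_div, neg_neg, one_div, inv_pow,
              inv_mul_eq_div]
          · rw [mul_zero]
  rw [hvalue] at hsum
  refine hsum.congr_fun fun x => ?_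
  rw [charlier, mul_sum, sum_mul]
  exact sum_congr rfl fun j _ => by ring

end Orthogonality

theorem charlierFun_mul_charlierFun {a : ℝ} (ha : 0 ≤ a) (k l x : ℕ) :
    charlierFun a k x * charlierFun a l x = √(a ^ k / k !) * √(a ^ l / l !) *
      (poissonWeight a x * charlier a k x * charlier a l x) := by
  have hsplit (n : ℕ) : √(a ^ (x + n) / (x ! * n !)) = √(a ^ x / x !) * √(a ^ n / n !) := by
    rw [pow_add, mul_div_mul_comm, Real.sqrt_mul (by positivity)]
  have hexp : Real.exp (-a / 2) * Real.exp (-a / 2) = Real.exp (-a) := by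
    rw [← Real.exp_add, add_halves]
  have hsq : √(a ^ x / x !) * √(a ^ x / x !) = a ^ x / x ! := Real.mul_self_sqrt (by positivity)
  simp only [charlierFun, poissonWeight, hsplit]
  linear_combination (√(a ^ k / k !) * √(a ^ l / l !) * charlier a k x * charlier a l x) *
    (a ^ x / x ! * hexp + Real.exp (-a / 2) * Real.exp (-a / 2) * hsq)

/-- For `a > 0`, the Charlier functions form an orthonormal family in `ℓ²(ℕ)`:
`Σ_{x∈ℕ} f_k^{(a)}(x) f_l^{(a)}(x) = δ_{kl}`. Equivalently,
`Σ_{x∈ℕ} (e^{−a} a^x/x!) C_k^{(a)}(x) C_l^{(a)}(x) = δ_{kl} · k!/a^k`. -/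
theorem charlierFun_orthonormal (a : ℝ) (ha : 0 < a) :
    (∀ k l : ℕ, HasSum (fun x : ℕ => charlierFun a k x * charlierFun a l x)
        (if k = l then 1 else 0)) ∧
      (∀ k l : ℕ, HasSum
        (fun x : ℕ => Real.exp (-a) * a ^ x / (x ! : ℝ) * charlier a k x * charlier a l x)
        (if k = l then (k ! : ℝ) / a ^ k else 0)) := by
  have horth := hasSum_poissonWeight_mul_charlier_mul_charlier ha.ne'
  refine ⟨fun k l => ?_, horth⟩
  have hnorm : √(a ^ k / k !) * √(a ^ l / l !) * (if k = l then (k ! : ℝ) / a ^ k else 0)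
      = if k = l then 1 else 0 := by
    split_ifs with hkl
    · subst hkl
      rw [Real.mul_self_sqrt (by positivity)]
      field_simp
    · rw [mul_zero]
  rw [← hnorm]
  exact ((horth k l).mul_left _).congr_fun (charlierFun_mul_charlierFun ha.le k l)
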